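/- arXiv:2603.29096 — 3 statements merged into one kernel-verified Lean document; each statement's English description precedes it below -/
import Mathlib

section
/- Let K : ℝ^m → [0,∞) be measurable with 0 < Z = ∫ K < ∞. The one-step Sliced Gibbs transition kernel T((u,x) → (ũ, x̃)) = [1{K(x) > ũ}/K(x)] · ∏_{j=1}^m [1{K(x̃₁,…,x̃_j, x_{j+1},…,x_m) > ũ}/A_j(x̃₁,…,x̃_{j-1}, x_{j+1},…,x_m, ũ)] leaves the density H(u,x) = 1{K(x) > u}/Z invariant: ∫ T((u,x)→(ũ,x̃)) H(u,x) du dx = H(ũ, x̃), provided all slice widths A_j are positive and finite along the chain. -/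
open MeasureTheory Set

/-!
Integrating out the old height `u` gives `K x`, which cancels the factor `1 / K x` of the
kernel. The coordinates `x₁, …, x_m` are then integrated out in this order: after the first
`j - 1` integrations the only factor still depending on `x_j` is `1{K(x̃_{<j}, x_j, x_{>j}) > ũ}`,
whose integral in `x_j` is exactly `A_j`; it cancels the `j`-th denominator and leaves the
indicator at the next hybrid point. The product telescopes to `1{K x̃ > ũ}`.
-/

/-- The vector `(x̃₁,…,x̃_{j-1}, x_j,…,x_m)`: coordinates strictly below `j` come from `x̃`,
the rest from `x`. -/
noncomputable def hybLt {m : ℕ} (xt x : Fin m → ℝ) (j : Fin m) : Fin m → ℝ :=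
  fun i => if (i : ℕ) < (j : ℕ) then xt i else x i

/-- The vector `(x̃₁,…,x̃_j, x_{j+1},…,x_m)`: coordinates up to and including `j` from `x̃`,
the rest from `x`. -/
noncomputable def hybLe {m : ℕ} (xt x : Fin m → ℝ) (j : Fin m) : Fin m → ℝ :=
  fun i => if (i : ℕ) ≤ (j : ℕ) then xt i else x i

/-- Slice width `A_j(x̃₁,…,x̃_{j-1}, x_{j+1},…,x_m; u)`: Lebesgue measure of the `j`-th
conditional level set. -/
noncomputable def Aslice {m : ℕ} (K : (Fin m → ℝ) → ℝ) (xt x : Fin m → ℝ) (j : Fin m)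
    (u : ℝ) : ℝ :=
  ∫ z : ℝ, (if u < K (Function.update (hybLt xt x j) j z) then (1 : ℝ) else 0)

/-- One-step Sliced Gibbs transition kernel density
`T((u,x) → (ũ,x̃))` (it does not depend on the previous height `u`). -/
noncomputable def sgKernel {m : ℕ} (K : (Fin m → ℝ) → ℝ) (x : Fin m → ℝ) (ut : ℝ)
    (xt : Fin m → ℝ) : ℝ :=
  ((if ut < K x then (1 : ℝ) else 0) / K x) *
    ∏ j : Fin m, (if ut < K (hybLe xt x j) then (1 : ℝ) else 0) / Aslice K xt x j ut

open scoped ENNReal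

namespace GibbsSweep

variable {m : ℕ} {X : Fin m → Type*}

def splice (xt x : ∀ i, X i) (k : ℕ) : ∀ i, X i :=
  fun i => if (i : ℕ) < k then xt i else x i

section Splice

variable (xt x : ∀ i, X i)

@[simp] lemma splice_zero : splice xt x 0 = x := by
  funext i; simp [splice]

lemma splice_of_le {k : ℕ} (hk : m ≤ k) : splice xt x k = xt := by
  funext i; simp [splice, i.isLt.trans_le hk]

lemma splice_update_of_lt {k : ℕ} {i : Fin m} (hi : (i : ℕ) < k) (t : X i) :
    splice xt (Function.update x i t) k = splice xt x k := by
  funext l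
  rcases eq_or_ne l i with rfl | hl
  · simp [splice, hi]
  · simp [splice, Function.update_of_ne hl]

lemma splice_update_of_le {k : ℕ} {i : Fin m} (hi : k ≤ (i : ℕ)) (t : X i) :
    splice xt (Function.update x i t) k = Function.update (splice xt x k) i t := by
  funext l
  rcases eq_or_ne l i with rfl | hl
  · simp [splice, hi.not_gt]
  · simp [splice, Function.update_of_ne hl]

lemma update_splice_update_of_le {i j : Fin m} (hij : i ≤ j) (t : X i) (z : X j) :
    Function.update (splice xt (Function.update x i t) j) j z =
      Function.update (splice xt x j) j z := by
  rcases hij.lt_or_eq with hij | rfl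
  · rw [splice_update_of_lt xt x hij]
  · rw [splice_update_of_le xt x le_rfl, Function.update_idem]

end Splice

variable [∀ i, MeasurableSpace (X i)] (μ : ∀ i, Measure (X i))
  (f : (∀ i, X i) → ℝ≥0∞) (xt : ∀ i, X i)

lemma measurable_splice (k : ℕ) : Measurable fun x : ∀ i, X i => splice xt x k :=
  measurable_pi_lambda _ fun i => by
    by_cases h : (i : ℕ) < k
    · simp [splice, h]
    · simpa [splice, h] using measurable_pi_apply i

/-- For `f = 1{K > u}` this is the slice width `A_j` of the sampler. -/
noncomputable def sliceMass (x : ∀ i, X i) (j : Fin m) : ℝ≥0∞ :=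
  ∫⁻ z, f (Function.update (splice xt x j) j z) ∂μ j

/-- Density of the `j`-th coordinate move of a systematic-scan Gibbs sweep from `x` to `xt`. -/
noncomputable def stepDensity (j : Fin m) (x : ∀ i, X i) : ℝ≥0∞ :=
  f (splice xt x ((j : ℕ) + 1)) / sliceMass μ f xt x j

lemma sliceMass_update_of_le {i j : Fin m} (hij : i ≤ j) (x : ∀ i, X i) (t : X i) :
    sliceMass μ f xt (Function.update x i t) j = sliceMass μ f xt x j := by
  simp only [sliceMass, update_splice_update_of_le xt x hij]

lemma stepDensity_update_of_le {i j : Fin m} (hij : i ≤ j) (x : ∀ i, X i) (t : X i) :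
    stepDensity μ f xt j (Function.update x i t) = stepDensity μ f xt j x := by
  rw [stepDensity, stepDensity, sliceMass_update_of_le μ f xt hij,
    splice_update_of_lt xt x (Nat.lt_succ_of_le hij)]

variable {f xt}

lemma lintegral_update_mul_prod_stepDensity (hf : Measurable f) (x : ∀ i, X i) (i : Fin m)
    (h0 : sliceMass μ f xt x i ≠ 0) (htop : sliceMass μ f xt x i ≠ ∞) :
    ∫⁻ t, f (splice xt (Function.update x i t) i) *
        ∏ j with i ≤ j, stepDensity μ f xt j (Function.update x i t) ∂μ i =
      f (splice xt x ((i : ℕ) + 1)) * ∏ j with i < j, stepDensity μ f xt j x := by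
  have hins : Finset.univ.filter (i ≤ ·) = insert i (Finset.univ.filter (i < ·)) := by
    ext j; simp [le_iff_eq_or_lt, eq_comm]
  calc _ = ∫⁻ t, f (Function.update (splice xt x i) i t) *
          ∏ j with i ≤ j, stepDensity μ f xt j x ∂μ i := by
        refine lintegral_congr fun t => ?_
        rw [splice_update_of_le xt x le_rfl, Finset.prod_congr rfl fun j hj =>
          stepDensity_update_of_le μ f xt (Finset.mem_filter.mp hj).2 x t]
    _ = sliceMass μ f xt x i *
          (stepDensity μ f xt i x * ∏ j with i < j, stepDensity μ f xt j x) := by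
        rw [lintegral_mul_const _ (by exact hf.comp (measurable_update _)), hins,
          Finset.prod_insert (by simp)]
        rfl
    _ = _ := by rw [← mul_assoc, stepDensity, ENNReal.mul_div_cancel h0 htop]

variable [∀ i, SigmaFinite (μ i)] (xt)

lemma measurable_sliceMass (hf : Measurable f) (j : Fin m) :
    Measurable fun x => sliceMass μ f xt x j :=
  (hf.comp (measurable_update'.comp
    ((measurable_splice xt j).prodMap measurable_id))).lintegral_prod_right'

lemma measurable_stepDensity (hf : Measurable f) (j : Fin m) :
    Measurable (stepDensity μ f xt j) :=
  (hf.comp (measurable_splice xt _)).div (measurable_sliceMass μ xt hf j)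

lemma measurable_integral_slice {f : (∀ i, X i) → ℝ} (hf : Measurable f) (j : Fin m) :
    Measurable fun x => ∫ z, f (Function.update (splice xt x j) j z) ∂μ j :=
  (hf.comp (measurable_update'.comp ((measurable_splice xt j).prodMap measurable_id)))
    |>.stronglyMeasurable.integral_prod_right'.measurable

variable {xt}

lemma lmarginal_mul_prod_stepDensity (hf : Measurable f)
    (h0 : ∀ x j, sliceMass μ f xt x j ≠ 0) (htop : ∀ x j, sliceMass μ f xt x j ≠ ∞)
    {k : ℕ} (hk : k ≤ m) :
    (∫⋯∫⁻_Finset.univ.filter fun i : Fin m => i.val < k,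
        (fun x => f x * ∏ j, stepDensity μ f xt j x) ∂μ) =
      fun x => f (splice xt x k) * ∏ j : Fin m with k ≤ j.val, stepDensity μ f xt j x := by
  have hmeas : Measurable fun x => f x * ∏ j, stepDensity μ f xt j x :=
    hf.mul (Finset.measurable_prod _ fun j _ => measurable_stepDensity μ xt hf j)
  induction k with
  | zero => simp
  | succ k ih =>
    let i : Fin m := ⟨k, hk⟩
    have hins : Finset.univ.filter (fun l : Fin m => l.val < k + 1) =
        insert i (Finset.univ.filter fun l : Fin m => l.val < k) := by
      ext l; simp [i, Fin.ext_iff]; omega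
    funext x
    rw [hins, lmarginal_insert _ hmeas (by simp [i]), ih (Nat.le_of_succ_le hk)]
    exact lintegral_update_mul_prod_stepDensity μ hf x i (h0 x i) (htop x i)

theorem lintegral_mul_prod_stepDensity (hf : Measurable f)
    (h0 : ∀ x j, sliceMass μ f xt x j ≠ 0) (htop : ∀ x j, sliceMass μ f xt x j ≠ ∞) :
    ∫⁻ x, f x * ∏ j, stepDensity μ f xt j x ∂Measure.pi μ = f xt := by
  have huniv : Finset.univ.filter (fun i : Fin m => i.val < m) = Finset.univ :=
    Finset.filter_true_of_mem fun i _ => i.isLt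
  have hempty : Finset.univ.filter (fun j : Fin m => m ≤ j.val) = ∅ :=
    Finset.filter_false_of_mem fun j _ => not_le.mpr j.isLt
  have h := congrFun (lmarginal_mul_prod_stepDensity μ hf h0 htop le_rfl) xt
  rw [huniv, hempty, Finset.prod_empty, mul_one, splice_of_le xt xt le_rfl] at h
  rw [lintegral_eq_lmarginal_univ xt, h]

theorem integral_mul_prod_div_integral_slice {f : (∀ i, X i) → ℝ} (hf : Measurable f)
    (hf_nonneg : 0 ≤ f)
    (hpos : ∀ x j, 0 < ∫ z, f (Function.update (splice xt x j) j z) ∂μ j) :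
    ∫ x, f x * ∏ j : Fin m, f (splice xt x ((j : ℕ) + 1)) /
        ∫ z, f (Function.update (splice xt x j) j z) ∂μ j ∂Measure.pi μ = f xt := by
  set F : (∀ i, X i) → ℝ≥0∞ := fun y => ENNReal.ofReal (f y)
  have hslice : ∀ x j, sliceMass μ F xt x j =
      ENNReal.ofReal (∫ z, f (Function.update (splice xt x j) j z) ∂μ j) := fun x j =>
    (ofReal_integral_eq_lintegral_ofReal (Integrable.of_integral_ne_zero (hpos x j).ne')
      (ae_of_all _ fun z => hf_nonneg _)).symm
  have hprod_nonneg : ∀ x, 0 ≤ ∏ j : Fin m, f (splice xt x ((j : ℕ) + 1)) /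
      ∫ z, f (Function.update (splice xt x j) j z) ∂μ j := fun x =>
    Finset.prod_nonneg fun j _ => div_nonneg (hf_nonneg _) (hpos x j).le
  have hofReal : ∀ x, ENNReal.ofReal (f x * ∏ j : Fin m, f (splice xt x ((j : ℕ) + 1)) /
      ∫ z, f (Function.update (splice xt x j) j z) ∂μ j) =
        F x * ∏ j, stepDensity μ F xt j x := fun x => by
    rw [ENNReal.ofReal_mul (hf_nonneg x), ENNReal.ofReal_prod_of_nonneg
      fun j _ => div_nonneg (hf_nonneg _) (hpos x j).le]
    congr 1
    refine Finset.prod_congr rfl fun j _ => ?_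
    rw [ENNReal.ofReal_div_of_pos (hpos x j), stepDensity, hslice]
  have hmeas : Measurable fun x => f x * ∏ j : Fin m, f (splice xt x ((j : ℕ) + 1)) /
      ∫ z, f (Function.update (splice xt x j) j z) ∂μ j :=
    hf.mul (Finset.measurable_prod _ fun j _ =>
      (hf.comp (measurable_splice xt _)).div (measurable_integral_slice μ xt hf j))
  rw [integral_eq_lintegral_of_nonneg_ae
      (ae_of_all _ fun x => mul_nonneg (hf_nonneg x) (hprod_nonneg x)) hmeas.aestronglyMeasurable,
    lintegral_congr fun x => hofReal x,
    lintegral_mul_prod_stepDensity μ (f := F) (ENNReal.measurable_ofReal.comp hf)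
      (fun x j => by simpa [hslice] using hpos x j)
      (fun x j => by simp [hslice]),
    ENNReal.toReal_ofReal (hf_nonneg xt)]

end GibbsSweep

lemma hybLe_eq_splice {m : ℕ} (xt x : Fin m → ℝ) (j : Fin m) :
    hybLe xt x j = GibbsSweep.splice xt x ((j : ℕ) + 1) := by
  funext i; simp [hybLe, GibbsSweep.splice]

lemma setIntegral_Ioi_zero_ite_lt {c : ℝ} (hc : 0 ≤ c) :
    ∫ u in Set.Ioi (0 : ℝ), (if c > u then (1 : ℝ) else 0) = c := by
  have hind : (fun u : ℝ => if c > u then (1 : ℝ) else 0) = (Iio c).indicator 1 := by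
    funext u; simp [Set.indicator_apply]
  rw [hind, setIntegral_indicator measurableSet_Iio, Ioi_inter_Iio]
  simp [Real.volume_real_Ioo_of_le hc]

/-- The layer-cake identity `∫₀^∞ 1{u < K x} du = K x` cancels the factor `1 / K x`. -/
lemma setIntegral_sgKernel_mul {m : ℕ} (K : (Fin m → ℝ) → ℝ) (Z ut : ℝ) (hut : 0 < ut)
    (x xt : Fin m → ℝ) :
    ∫ u in Set.Ioi (0 : ℝ), sgKernel K x ut xt * ((if K x > u then (1 : ℝ) else 0) / Z) =
      ((if ut < K x then (1 : ℝ) else 0) *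
        ∏ j, (if ut < K (hybLe xt x j) then (1 : ℝ) else 0) / Aslice K xt x j ut) / Z := by
  by_cases hx : ut < K x
  · have hKx : 0 < K x := hut.trans hx
    rw [integral_const_mul, integral_div, setIntegral_Ioi_zero_ite_lt hKx.le]
    simp only [sgKernel, if_pos hx]
    field_simp
  · simp [sgKernel, hx]

theorem sliced_gibbs_invariance_general
    (m : ℕ) (K : (Fin m → ℝ) → ℝ)
    (hK_meas : Measurable K)
    (Z : ℝ)
    (hA_pos : ∀ (xt x : Fin m → ℝ) (j : Fin m) (u : ℝ), 0 < u →
      0 < Aslice K xt x j u) :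
    ∀ (ut : ℝ) (xt : Fin m → ℝ), 0 < ut →
      (∫ x : Fin m → ℝ, ∫ u in Set.Ioi (0 : ℝ),
          sgKernel K x ut xt * ((if K x > u then (1 : ℝ) else 0) / Z))
        = (if K xt > ut then (1 : ℝ) else 0) / Z := by
  intro ut xt hut
  set level : (Fin m → ℝ) → ℝ := fun y => if ut < K y then 1 else 0
  have hlevel : Measurable level :=
    Measurable.ite (measurableSet_lt measurable_const hK_meas) measurable_const measurable_const
  have hsweep : ∫ x, level x * ∏ j, level (hybLe xt x j) / Aslice K xt x j ut = level xt := by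
    simp only [hybLe_eq_splice]
    exact GibbsSweep.integral_mul_prod_div_integral_slice (fun _ => volume) hlevel
      (fun y => by positivity) fun x j => hA_pos xt x j ut hut
  simp_rw [setIntegral_sgKernel_mul K Z ut hut]
  rw [integral_div, hsweep]

/-- Stationarity of the Sliced Gibbs sampler: the transition kernel leaves the joint
density `H(u,x) = 1{K(x) > u}/Z` invariant, provided all slice widths are positive and
finite. -/
theorem sliced_gibbs_invariance
    (m : ℕ) (K : (Fin m → ℝ) → ℝ)
    (hK_meas : Measurable K)
    (hK_nonneg : ∀ x, 0 ≤ K x)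
    (hK_int : Integrable K)
    (Z : ℝ) (hZ : Z = ∫ x, K x) (hZ_pos : 0 < Z)
    (hA_int : ∀ (xt x : Fin m → ℝ) (j : Fin m) (u : ℝ), 0 < u →
      Integrable (fun z : ℝ =>
        (if u < K (Function.update (hybLt xt x j) j z) then (1 : ℝ) else 0)))
    (hA_pos : ∀ (xt x : Fin m → ℝ) (j : Fin m) (u : ℝ), 0 < u →
      0 < Aslice K xt x j u) :
    ∀ (ut : ℝ) (xt : Fin m → ℝ), 0 < ut →
      (∫ x : Fin m → ℝ, ∫ u in Set.Ioi (0 : ℝ),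
          sgKernel K x ut xt * ((if K x > u then (1 : ℝ) else 0) / Z))
        = (if K xt > ut then (1 : ℝ) else 0) / Z :=
  sliced_gibbs_invariance_general m K hK_meas Z hA_pos
end

section
/- A Markov transition kernel T on a measurable space satisfying the Doeblin condition T(x, A) ≥ ε ν(A) for all x and measurable A, with ε ∈ (0,1] and ν a probability measure, is uniformly ergodic: for every x, the total variation distance between the n-step kernel T^n(x, ·) and the invariant distribution π satisfies ‖T^n(x,·) − π‖_TV ≤ (1 − ε)^n. -/
/-!
Subtracting the minorising part `ε ν(A)` from `T(x, A)` leaves a function of `x` with values in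
`[0, 1 - ε]`, and this common part cancels when two initial distributions are compared. Hence,
by the layer-cake formula, if `μ(B) ≤ ρ(B) + D` for all measurable `B`, then
`μT(A) ≤ ρT(A) + (1 - ε) D`. Starting from `D = 1` and comparing `T^n(x, ·)` with the invariant
`π = πT^n` in both directions gives the bound `(1 - ε)^n` on the total variation distance.
-/

open MeasureTheory ProbabilityTheory Set
open scoped ENNReal NNReal

/-- Total variation distance between two measures: `sup_A |μ(A) − ν(A)|` over
measurable sets `A`. -/
noncomputable def tvDist {X : Type*} [MeasurableSpace X] (μ ν : Measure X) : ℝ :=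
  ⨆ A : {A : Set X // MeasurableSet A}, |(μ A.1).toReal - (ν A.1).toReal|

noncomputable def iterKernel {X : Type*} [MeasurableSpace X] (T : Kernel X X) :
    ℕ → Kernel X X
  | 0 => Kernel.id
  | n + 1 => T ∘ₖ iterKernel T n

section

variable {X : Type*} [MeasurableSpace X]

instance isMarkovKernel_iterKernel (T : Kernel X X) [IsMarkovKernel T] :
    ∀ n, IsMarkovKernel (iterKernel T n)
  | 0 => by rw [iterKernel]; infer_instance
  | n + 1 => by
      have := isMarkovKernel_iterKernel T n
      rw [iterKernel]; infer_instance

theorem iterKernel_succ_apply (T : Kernel X X) (n : ℕ) (x : X) :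
    iterKernel T (n + 1) x = (iterKernel T n x).bind T := by
  rw [iterKernel, Kernel.comp_apply]

theorem tvDist_le_of_le_add {μ ν : Measure X} [IsFiniteMeasure μ] [IsFiniteMeasure ν]
    {r : ℝ} (hr : 0 ≤ r) (hμν : ∀ A, MeasurableSet A → μ A ≤ ν A + ENNReal.ofReal r)
    (hνμ : ∀ A, MeasurableSet A → ν A ≤ μ A + ENNReal.ofReal r) : tvDist μ ν ≤ r := by
  have toReal_sub_le {a b : ℝ≥0∞} (hb : b ≠ ∞) (h : a ≤ b + ENNReal.ofReal r) :
      a.toReal - b.toReal ≤ r := by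
    have := ENNReal.toReal_mono (ENNReal.add_ne_top.mpr ⟨hb, ENNReal.ofReal_ne_top⟩) h
    rw [ENNReal.toReal_add hb ENNReal.ofReal_ne_top, ENNReal.toReal_ofReal hr] at this
    linarith
  have : Nonempty {A : Set X // MeasurableSet A} := ⟨⟨∅, .empty⟩⟩
  refine ciSup_le fun ⟨A, hA⟩ => abs_sub_le_iff.mpr ⟨?_, ?_⟩
  · exact toReal_sub_le (measure_ne_top ν A) (hμν A hA)
  · exact toReal_sub_le (measure_ne_top μ A) (hνμ A hA)

theorem lintegral_le_lintegral_add_mul_of_le_add {μ ρ : Measure X} {D : ℝ≥0∞}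
    (hD : ∀ B, MeasurableSet B → μ B ≤ ρ B + D) {g : X → ℝ≥0∞} (hg : Measurable g)
    {c : ℝ≥0} (hgc : ∀ x, g x ≤ c) : ∫⁻ x, g x ∂μ ≤ ∫⁻ x, g x ∂ρ + c * D := by
  set f : X → ℝ := fun x => (g x).toReal
  have hf : Measurable f := hg.ennreal_toReal
  have hg_eq : g = fun x => ENNReal.ofReal (f x) := funext fun x =>
    (ENNReal.ofReal_toReal (ne_top_of_le_ne_top ENNReal.coe_ne_top (hgc x))).symm
  have layercake (η : Measure X) : ∫⁻ x, g x ∂η = ∫⁻ t in Ioi 0, η {x | t < f x} := by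
    rw [hg_eq]
    exact lintegral_eq_lintegral_meas_lt η (.of_forall fun _ => ENNReal.toReal_nonneg)
      hf.aemeasurable
  have hρ_anti : Antitone fun t : ℝ => ρ {x | t < f x} :=
    fun s t hst => measure_mono fun x hx => lt_of_le_of_lt hst hx
  have level_le (t : ℝ) (ht : t ∈ Ioi 0) :
      μ {x | t < f x} ≤ ρ {x | t < f x} + (Ioc 0 (c : ℝ)).indicator (fun _ => D) t := by
    by_cases htc : t ≤ c
    · rw [indicator_of_mem (show t ∈ Ioc 0 (c : ℝ) from ⟨ht, htc⟩)]
      exact hD _ (measurableSet_lt measurable_const hf)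
    · have hf_le (x : X) : f x ≤ c := by
        simpa using ENNReal.toReal_mono ENNReal.coe_ne_top (hgc x)
      have : {x | t < f x} = ∅ := eq_empty_of_forall_notMem fun x hx =>
        htc ((le_of_lt hx).trans (hf_le x))
      simp [this]
  calc ∫⁻ x, g x ∂μ
      ≤ ∫⁻ t in Ioi 0, (ρ {x | t < f x} + (Ioc 0 (c : ℝ)).indicator (fun _ => D) t) := by
        rw [layercake]; exact setLIntegral_mono' measurableSet_Ioi level_le
    _ ≤ ∫⁻ x, g x ∂ρ + ∫⁻ t, (Ioc 0 (c : ℝ)).indicator (fun _ => D) t := by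
        rw [lintegral_add_left hρ_anti.measurable, layercake]
        exact add_le_add le_rfl (setLIntegral_le_lintegral _ _)
    _ = ∫⁻ x, g x ∂ρ + c * D := by
        rw [lintegral_indicator_const measurableSet_Ioc, Real.volume_Ioc, sub_zero,
          ENNReal.ofReal_coe_nnreal, mul_comm]

variable (T : Kernel X X) [IsMarkovKernel T] (ν : Measure X) [IsProbabilityMeasure ν]
  {ε : ℝ≥0}

theorem apply_sub_le_one_sub_of_doeblin
    (hT : ∀ x A, MeasurableSet A → ε * ν A ≤ T x A) {A : Set X} (hA : MeasurableSet A)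
    (x : X) : T x A - ε * ν A ≤ 1 - ε := by
  have hε_split : (ε : ℝ≥0∞) = ε * ν Aᶜ + ε * ν A := by
    rw [← mul_add, add_comm, measure_add_measure_compl hA, measure_univ, mul_one]
  have hTA : T x A ≤ 1 - ε * ν Aᶜ := by
    refine ENNReal.le_sub_of_add_le_right (by finiteness) ?_
    calc T x A + ε * ν Aᶜ ≤ T x A + T x Aᶜ := by gcongr; exact hT x _ hA.compl
      _ = 1 := by rw [measure_add_measure_compl hA, measure_univ]
  calc T x A - ε * ν A ≤ 1 - ε * ν Aᶜ - ε * ν A := by gcongr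
    _ = 1 - ε := by rw [tsub_tsub, ← hε_split]

theorem bind_apply_le_add_of_doeblin (hT : ∀ x A, MeasurableSet A → ε * ν A ≤ T x A)
    {μ ρ : Measure X} [IsProbabilityMeasure μ] [IsProbabilityMeasure ρ] {D : ℝ≥0∞}
    (hD : ∀ B, MeasurableSet B → μ B ≤ ρ B + D) {A : Set X} (hA : MeasurableSet A) :
    μ.bind T A ≤ ρ.bind T A + (1 - ε) * D := by
  set c₀ : ℝ≥0∞ := ε * ν A
  have bind_eq (η : Measure X) [IsProbabilityMeasure η] :
      η.bind T A = ∫⁻ x, (T x A - c₀) ∂η + c₀ := by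
    rw [Measure.bind_apply hA (Kernel.aemeasurable T)]
    calc ∫⁻ x, T x A ∂η = ∫⁻ x, (T x A - c₀ + c₀) ∂η :=
          lintegral_congr fun x => (tsub_add_cancel_of_le (hT x A hA)).symm
      _ = ∫⁻ x, (T x A - c₀) ∂η + c₀ := by
        rw [lintegral_add_right _ measurable_const, lintegral_const, measure_univ, mul_one]
  have hle := lintegral_le_lintegral_add_mul_of_le_add hD
    ((Kernel.measurable_coe T hA).sub measurable_const) (c := 1 - ε)
    (fun x => by simpa using apply_sub_le_one_sub_of_doeblin T ν hT hA x)
  calc μ.bind T A = ∫⁻ x, (T x A - c₀) ∂μ + c₀ := bind_eq μ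
    _ ≤ ∫⁻ x, (T x A - c₀) ∂ρ + (1 - ε) * D + c₀ := by gcongr; simpa using hle
    _ = ρ.bind T A + (1 - ε) * D := by rw [bind_eq ρ]; ring

theorem le_add_pow_of_doeblin (hT : ∀ x A, MeasurableSet A → ε * ν A ≤ T x A)
    {μ ρ : ℕ → Measure X} [∀ n, IsProbabilityMeasure (μ n)] [∀ n, IsProbabilityMeasure (ρ n)]
    (hμ : ∀ n, μ (n + 1) = (μ n).bind T) (hρ : ∀ n, ρ (n + 1) = (ρ n).bind T)
    (n : ℕ) {B : Set X} (hB : MeasurableSet B) : μ n B ≤ ρ n B + (1 - ε) ^ n := by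
  induction n generalizing B with
  | zero => simpa using prob_le_one.trans le_add_self
  | succ n ih =>
    rw [hμ, hρ, pow_succ']
    exact bind_apply_le_add_of_doeblin T ν hT (fun _ hB' => ih hB') hB

end

/-- A Markov kernel satisfying the Doeblin condition `T(x, A) ≥ ε ν(A)` with
`ε ∈ (0,1]` and `ν` a probability measure is uniformly ergodic:
`‖T^n(x,·) − π‖_TV ≤ (1 − ε)^n` for every `x` and `n`, where `π` is the invariant
distribution. -/
theorem doeblin_implies_uniform_ergodicity
    {X : Type*} [MeasurableSpace X]
    (T : Kernel X X) [IsMarkovKernel T]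
    (π ν : Measure X) [IsProbabilityMeasure π] [IsProbabilityMeasure ν]
    (hπ_inv : π.bind T = π)
    (ε : ℝ) (hε0 : 0 < ε) (hε1 : ε ≤ 1)
    (hDoeblin : ∀ (x : X) (A : Set X), MeasurableSet A →
      ENNReal.ofReal ε * ν A ≤ T x A) :
    ∀ (x : X) (n : ℕ), tvDist ((iterKernel T n) x) π ≤ (1 - ε) ^ n := by
  intro x n
  have hrate : ENNReal.ofReal ((1 - ε) ^ n) = (1 - (ε.toNNReal : ℝ≥0∞)) ^ n := by
    rw [ENNReal.ofReal_pow (by linarith), ENNReal.ofReal_sub _ hε0.le, ENNReal.ofReal_one]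
    rfl
  apply tvDist_le_of_le_add (pow_nonneg (by linarith) n) <;> intro A hA <;> rw [hrate]
  · exact le_add_pow_of_doeblin T ν hDoeblin (μ := (iterKernel T · x)) (ρ := fun _ => π)
      (iterKernel_succ_apply T · x) (fun _ => hπ_inv.symm) n hA
  · exact le_add_pow_of_doeblin T ν hDoeblin (μ := fun _ => π) (ρ := (iterKernel T · x))
      (fun _ => hπ_inv.symm) (iterKernel_succ_apply T · x) n hA
end

section
/- The LASSO kernel K(β) = exp(−[(1/(2N))∑_{i=1}^N (y_i − β₀ − z_iᵀβ)² + λ∑_j |β_j|]) on ℝ^{p+1} is integrable whenever λ > 0, i.e., ∫ K(β) dβ < ∞, regardless of whether the design matrix has full column rank. -/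
/-!
The quadratic term alone cannot control `β`, and the `ℓ₁` penalty does not involve `β₀`.
Cauchy–Schwarz gives `(1/(2N)) ∑ᵢ (cᵢ - β₀)² ≥ (β₀ - c̄)² / 2` with `cᵢ = yᵢ - zᵢᵀβ`, so the
kernel is dominated by `exp (-(β₀ - m β)² / 2) · ∏ⱼ exp (-λ |βⱼ|)` for an affine function `m`.
The shear `(β₀, β) ↦ (β₀ - m β, β)` preserves Lebesgue measure and turns this bound into a product
of a Gaussian density and Laplace densities.
-/

open MeasureTheory Set Finset

theorem sq_sub_average_le {ι : Type*} {s : Finset ι} (hs : s.Nonempty) (c : ι → ℝ) (b : ℝ) :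
    (b - (∑ i ∈ s, c i) / #s) ^ 2 ≤ (∑ i ∈ s, (c i - b) ^ 2) / #s := by
  have hcard : (0 : ℝ) < #s := by exact_mod_cast hs.card_pos
  have hsum : ∑ i ∈ s, (c i - b) = ∑ i ∈ s, c i - #s * b := by
    rw [Finset.sum_sub_distrib, Finset.sum_const, nsmul_eq_mul]
  have hcs : (∑ i ∈ s, (c i - b)) ^ 2 ≤ #s * ∑ i ∈ s, (c i - b) ^ 2 := sq_sum_le_card_mul_sum_sq
  rw [hsum] at hcs
  rw [le_div_iff₀ hcard]
  calc (b - (∑ i ∈ s, c i) / #s) ^ 2 * #s = (∑ i ∈ s, c i - #s * b) ^ 2 / #s := by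
        field_simp; ring
    _ ≤ _ := by rw [div_le_iff₀ hcard]; linarith

theorem integrable_exp_neg_mul_abs {b : ℝ} (hb : 0 < b) :
    Integrable fun x : ℝ => Real.exp (-(b * |x|)) := by
  have hIic : IntegrableOn (fun x : ℝ => Real.exp (-(b * |x|))) (Iic 0) :=
    (integrableOn_exp_mul_Iic hb 0).congr_fun
      (fun x hx => by simp [abs_of_nonpos (mem_Iic.mp hx)]) measurableSet_Iic
  have hIoi : IntegrableOn (fun x : ℝ => Real.exp (-(b * |x|))) (Ioi 0) :=
    (integrableOn_exp_mul_Ioi (neg_neg_of_pos hb) 0).congr_fun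
      (fun x hx => by simp [abs_of_pos (mem_Ioi.mp hx)]) measurableSet_Ioi
  rw [← integrableOn_univ, ← Iic_union_Ioi (a := (0 : ℝ))]
  exact hIic.union hIoi

namespace MeasureTheory

variable {G β : Type*} [MeasurableSpace G] [MeasurableSpace β] [AddGroup G] [MeasurableSub₂ G]
  (μ : Measure G) [μ.IsAddRightInvariant] [SFinite μ]
  (ν : Measure β) [SFinite ν] {m : β → G}

theorem measurePreserving_sub_comp_snd (hm : Measurable m) :
    MeasurePreserving (fun q : G × β => (q.1 - m q.2, q.2)) (μ.prod ν) (μ.prod ν) := by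
  have hskew : MeasurePreserving (fun q : β × G => (q.1, q.2 - m q.1)) (ν.prod μ) (ν.prod μ) :=
    (MeasurePreserving.id ν).skew_product (g := fun v x => x - m v)
      (measurable_snd.sub (hm.comp measurable_fst))
      (ae_of_all _ fun v => map_sub_right_eq_self μ (m v))
  exact (Measure.measurePreserving_swap.comp hskew).comp Measure.measurePreserving_swap

variable {μ ν}

theorem Integrable.comp_sub_mul_prod {L : Type*} [NormedRing L] {g : G → L} {h : β → L}
    (hg : Integrable g μ) (hh : Integrable h ν) (hm : Measurable m) :
    Integrable (fun q : G × β => g (q.1 - m q.2) * h q.2) (μ.prod ν) :=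
  (measurePreserving_sub_comp_snd μ ν hm).integrable_comp_of_integrable (hg.mul_prod hh)

end MeasureTheory

/-- The LASSO kernel
`K(β₀, β) = exp(−(1/(2N)) ∑ᵢ (yᵢ − β₀ − zᵢᵀβ)² − λ ∑ⱼ |βⱼ|)` is integrable on
`ℝ × ℝ^p` whenever `λ > 0`, regardless of the rank of the design matrix. -/
theorem lasso_kernel_integrable
    (N p : ℕ) (hN : 1 ≤ N)
    (y : Fin N → ℝ) (z : Fin N → Fin p → ℝ)
    (lam : ℝ) (hlam : 0 < lam) :
    Integrable (fun q : ℝ × (Fin p → ℝ) =>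
      Real.exp (-((1 / (2 * (N : ℝ))) *
          ∑ i : Fin N, (y i - q.1 - ∑ j : Fin p, z i j * q.2 j) ^ 2)
        - lam * ∑ j : Fin p, |q.2 j|)) := by
  set c : (Fin p → ℝ) → Fin N → ℝ := fun v i => y i - ∑ j, z i j * v j
  set m : (Fin p → ℝ) → ℝ := fun v => (∑ i, c v i) / N
  have hdom : Integrable (fun q : ℝ × (Fin p → ℝ) =>
      Real.exp (-(1 / 2) * (q.1 - m q.2) ^ 2) * ∏ j, Real.exp (-(lam * |q.2 j|))) :=
    (integrable_exp_neg_mul_sq (by norm_num)).comp_sub_mul_prod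
      (Integrable.fintype_prod fun _ => integrable_exp_neg_mul_abs hlam) (by fun_prop)
  refine hdom.mono' (by fun_prop : Continuous _).aestronglyMeasurable (ae_of_all _ fun q => ?_)
  have hquad : 1 / 2 * (q.1 - m q.2) ^ 2 ≤ 1 / (2 * (N : ℝ)) * ∑ i, (c q.2 i - q.1) ^ 2 := by
    have h := sq_sub_average_le (univ_nonempty_iff.mpr ⟨⟨0, hN⟩⟩) (c q.2) q.1
    rw [Finset.card_univ, Fintype.card_fin] at h
    calc _ ≤ 1 / 2 * ((∑ i, (c q.2 i - q.1) ^ 2) / N) := by gcongr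
      _ = _ := by ring
  have hres : ∀ i, y i - q.1 - ∑ j, z i j * q.2 j = c q.2 i - q.1 := fun i => sub_right_comm _ _ _
  rw [Real.norm_of_nonneg (Real.exp_pos _).le, ← Real.exp_sum, ← Real.exp_add,
    Finset.sum_congr rfl fun i _ => by rw [hres i], Finset.sum_neg_distrib, ← Finset.mul_sum]
  gcongr
  linarith
end
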